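/- Let R = F_2[X,Y,Z]/(X^2,Y^2,Z^2) with maximal ideal m. For every nonzero r ∈ m, the annihilator (0 : r) is not contained in m^2. -/

import Mathlib

/-- Length of a module: the longest chain in its submodule lattice. -/
noncomputable def len (R M : Type*) [Ring R] [AddCommGroup M] [Module R M] : ℕ∞ :=
  (Order.krullDim (Submodule R M)).unbotD 0

/-- Minimal number of generators of a submodule, as an extended natural number. -/
noncomputable def mu {R M : Type*} [Ring R] [AddCommGroup M] [Module R M]
    (N : Submodule R M) : ℕ∞ :=
  sInf {n : ℕ∞ | ∃ s : Finset M, (s.card : ℕ∞) = n ∧ Submodule.span R (s : Set M) = N}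

open MvPolynomial in
/-- The defining ideal `(X², Y², Z²)` of `F₂[X,Y,Z]`. -/
noncomputable def relIdeal : Ideal (MvPolynomial (Fin 3) (ZMod 2)) :=
  Ideal.span {X 0 ^ 2, X 1 ^ 2, X 2 ^ 2}

/-- The ring `R = F₂[X,Y,Z]/(X²,Y²,Z²)`. -/
abbrev Rcir : Type := MvPolynomial (Fin 3) (ZMod 2) ⧸ relIdeal

/-- The degree-`i` graded part of `R`, the image of the homogeneous polynomials of degree `i`. -/
noncomputable def gradedPart (i : ℕ) : Submodule (ZMod 2) Rcir :=
  Submodule.map (Ideal.Quotient.mkₐ (ZMod 2) relIdeal).toLinearMap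
    (MvPolynomial.homogeneousSubmodule (Fin 3) (ZMod 2) i)

/-- The maximal ideal `m = (x, y, z)` of `R`. -/
noncomputable def mIdeal : Ideal Rcir :=
  Ideal.span {Ideal.Quotient.mk relIdeal (MvPolynomial.X 0),
    Ideal.Quotient.mk relIdeal (MvPolynomial.X 1),
    Ideal.Quotient.mk relIdeal (MvPolynomial.X 2)}

/-!
Every element of `m` squares to zero, since squaring is additive in characteristic 2 and
`x² = y² = z² = 0`; so for `r ∉ m²` the element `r` itself lies in `(0 : r)` but not in `m²`.
For `r ∈ m²`, the products `x r` and `y r` lie in `m³ = (xyz)`, which is `{0, xyz}` because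
`R / m = F₂`; hence one of `x`, `y`, `x + y` annihilates `r`. None of these lies in `m²`: the
homomorphisms `R → F₂[ε]` sending one variable to `ε` and the others to `0` vanish on `m²`.
-/

open MvPolynomial DualNumber

theorem sq_eq_zero_of_mem_span {R : Type*} [CommRing R] (h2 : (2 : R) = 0) {S : Set R}
    (hS : ∀ s ∈ S, s ^ 2 = 0) {a : R} (ha : a ∈ Ideal.span S) : a ^ 2 = 0 := by
  induction ha using Submodule.span_induction with
  | mem s hs => exact hS s hs
  | zero => exact zero_pow two_ne_zero
  | add a b _ _ ha hb => linear_combination ha + hb + a * b * h2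
  | smul c a _ ha => linear_combination c ^ 2 * ha

theorem DualNumber.sq_le_ker_of_fst_eq_zero {R K : Type*} [CommRing R] [CommRing K]
    (φ : R →+* DualNumber K) {I : Ideal R} (h : ∀ a ∈ I, (φ a).fst = 0) :
    I ^ 2 ≤ RingHom.ker φ := by
  rw [sq, Ideal.mul_le]
  intro a ha b hb
  rw [RingHom.mem_ker, map_mul]
  ext <;> simp [h a ha, h b hb]

theorem DualNumber.eps_ne_zero {K : Type*} [Semiring K] [Nontrivial K] :
    (ε : DualNumber K) ≠ 0 :=
  fun h => one_ne_zero (congrArg TrivSqZeroExt.snd h)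

theorem DualNumber.pi_single_eps_sq {ι K : Type*} [DecidableEq ι] [Semiring K] (i j : ι) :
    (Pi.single j ε : ι → DualNumber K) i ^ 2 = 0 := by
  rw [Pi.single_apply]
  split_ifs <;> simp [sq]

noncomputable def gen (i : Fin 3) : Rcir := Ideal.Quotient.mk relIdeal (X i)

theorem mIdeal_eq_span_range_gen : mIdeal = Ideal.span (Set.range gen) := by
  rw [mIdeal]
  congr 1
  ext
  simp [gen, Fin.exists_fin_succ, eq_comm]

theorem two_eq_zero : (2 : Rcir) = 0 := by
  rw [← map_ofNat (algebraMap (ZMod 2) Rcir) 2, show (2 : ZMod 2) = 0 from rfl, map_zero]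

theorem gen_sq (i : Fin 3) : gen i ^ 2 = 0 := by
  rw [gen, ← map_pow, Ideal.Quotient.eq_zero_iff_mem]
  exact Ideal.subset_span (by fin_cases i <;> simp)


noncomputable def tangent (j : Fin 3) : Rcir →+* DualNumber (ZMod 2) :=
  Ideal.Quotient.lift relIdeal (aeval (Pi.single j ε)).toRingHom fun a ha => by
    refine RingHom.mem_ker.1 ((Ideal.span_le (I := RingHom.ker _)).2 ?_ ha)
    rintro _ (rfl | rfl | rfl) <;> simp [pi_single_eps_sq]

theorem sq_eq_zero_of_mem_mIdeal {a : Rcir} (ha : a ∈ mIdeal) : a ^ 2 = 0 := by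
  refine sq_eq_zero_of_mem_span two_eq_zero ?_ (mIdeal_eq_span_range_gen ▸ ha)
  rintro _ ⟨i, rfl⟩
  exact gen_sq i

theorem tangent_gen (i j : Fin 3) :
    tangent j (gen i) = (Pi.single j ε : Fin 3 → DualNumber (ZMod 2)) i := by
  simp [tangent, gen]

theorem fst_tangent_eq_zero (j : Fin 3) {a : Rcir} (ha : a ∈ mIdeal) : (tangent j a).fst = 0 := by
  rw [mIdeal_eq_span_range_gen] at ha
  induction ha using Submodule.span_induction with
  | mem _ hs =>
    obtain ⟨i, rfl⟩ := hs
    rw [tangent_gen, Pi.single_apply]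
    split_ifs <;> simp
  | zero => simp
  | add a b _ _ ha hb => simp [ha, hb]
  | smul c a _ ha => simp [ha]

theorem notMem_mIdeal_sq_of_tangent_ne_zero (j : Fin 3) {a : Rcir} (h : tangent j a ≠ 0) :
    a ∉ mIdeal ^ 2 :=
  fun ha => h (sq_le_ker_of_fst_eq_zero (tangent j) (fun _ => fst_tangent_eq_zero j) ha)

noncomputable def xyz : Rcir := ∏ i, gen i

theorem prod_gen_comp_eq_zero_or_eq_xyz (f : Fin 3 → Fin 3) :
    ∏ t, gen (f t) = 0 ∨ ∏ t, gen (f t) = xyz := by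
  by_cases hf : f.Injective
  · exact Or.inr (Fintype.prod_bijective f (Finite.injective_iff_bijective.1 hf) _ _ fun _ => rfl)
  · left
    obtain ⟨a, b, hfab, hab⟩ : ∃ a b, f a = f b ∧ a ≠ b := by
      simpa [Function.Injective] using hf
    have hdvd : gen (f a) * gen (f b) ∣ ∏ t, gen (f t) := by
      rw [← Finset.prod_pair (f := fun t => gen (f t)) hab]
      exact Finset.prod_dvd_prod_of_subset _ _ _ (Finset.subset_univ _)
    rwa [hfab, ← sq, gen_sq, zero_dvd_iff] at hdvd

theorem gen_mul_xyz (i : Fin 3) : gen i * xyz = 0 := by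
  rw [xyz, ← Finset.mul_prod_erase _ _ (Finset.mem_univ i), ← mul_assoc, ← sq, gen_sq,
    zero_mul]

theorem mul_xyz_eq_zero_of_mem {a : Rcir} (ha : a ∈ mIdeal) : a * xyz = 0 := by
  rw [mIdeal_eq_span_range_gen] at ha
  induction ha using Submodule.span_induction with
  | mem _ hs => obtain ⟨i, rfl⟩ := hs; exact gen_mul_xyz i
  | zero => exact zero_mul _
  | add a b _ _ ha hb => rw [add_mul, ha, hb, add_zero]
  | smul c a _ ha => rw [smul_eq_mul, mul_assoc, ha, mul_zero]

theorem mem_mIdeal_or_sub_one_mem (c : Rcir) : c ∈ mIdeal ∨ c - 1 ∈ mIdeal := by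
  set mk := Ideal.Quotient.mk relIdeal
  obtain ⟨p, rfl⟩ := Ideal.Quotient.mk_surjective c
  induction p using MvPolynomial.induction_on with
  | C a =>
    obtain rfl | rfl : a = 0 ∨ a = 1 := by revert a; decide
    · exact Or.inl (by rw [C_0, map_zero]; exact zero_mem _)
    · exact Or.inr (by rw [C_1, map_one, sub_self]; exact zero_mem _)
  | add p q hp hq =>
    rw [map_add]
    rcases hp with hp | hp <;> rcases hq with hq | hq
    · exact Or.inl (add_mem hp hq)
    · exact Or.inr (by simpa [add_sub_assoc] using add_mem hp hq)
    · exact Or.inr (by simpa [sub_add_eq_add_sub] using add_mem hp hq)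
    · left
      have hpq : mk p + mk q = (mk p - 1) + (mk q - 1) + 2 := by ring
      rw [hpq, two_eq_zero, add_zero]
      exact add_mem hp hq
  | mul_X p i _ =>
    rw [map_mul, mIdeal_eq_span_range_gen]
    exact Or.inl (Ideal.mul_mem_left _ _ (Ideal.subset_span ⟨i, rfl⟩))

theorem mul_xyz_eq_zero_or_eq (c : Rcir) : c * xyz = 0 ∨ c * xyz = xyz := by
  rcases mem_mIdeal_or_sub_one_mem c with hc | hc
  · exact Or.inl (mul_xyz_eq_zero_of_mem hc)
  · exact Or.inr (by linear_combination mul_xyz_eq_zero_of_mem hc)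

theorem mIdeal_pow_three_le_span_xyz : mIdeal ^ 3 ≤ Ideal.span {xyz} := by
  rw [mIdeal_eq_span_range_gen, Submodule.span_pow, Ideal.span_le]
  intro a ha
  obtain ⟨f, rfl⟩ := Set.mem_pow.1 ha
  choose g hg using fun t => (f t).2
  rw [List.prod_ofFn, SetLike.mem_coe]
  simp_rw [← hg]
  rcases prod_gen_comp_eq_zero_or_eq_xyz g with h | h <;> rw [h]
  · exact zero_mem _
  · exact Ideal.subset_span rfl

theorem eq_zero_or_eq_xyz_of_mem_pow_three {a : Rcir} (ha : a ∈ mIdeal ^ 3) :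
    a = 0 ∨ a = xyz := by
  obtain ⟨c, rfl⟩ := Ideal.mem_span_singleton'.1 (mIdeal_pow_three_le_span_xyz ha)
  exact mul_xyz_eq_zero_or_eq c

theorem exists_notMem_sq_mul_eq_zero {r : Rcir} (hr : r ∈ mIdeal ^ 2) :
    ∃ s ∉ mIdeal ^ 2, s * r = 0 := by
  have hgen : ∀ i, gen i * r = 0 ∨ gen i * r = xyz := fun i =>
    eq_zero_or_eq_xyz_of_mem_pow_three <| pow_succ' mIdeal 2 ▸
      Ideal.mul_mem_mul (mIdeal_eq_span_range_gen ▸ Ideal.subset_span ⟨i, rfl⟩) hr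
  have hx : gen 0 ∉ mIdeal ^ 2 :=
    notMem_mIdeal_sq_of_tangent_ne_zero 0 (by simp [tangent_gen, eps_ne_zero])
  have hy : gen 1 ∉ mIdeal ^ 2 :=
    notMem_mIdeal_sq_of_tangent_ne_zero 1 (by simp [tangent_gen, eps_ne_zero])
  have hxy : gen 0 + gen 1 ∉ mIdeal ^ 2 :=
    notMem_mIdeal_sq_of_tangent_ne_zero 0 (by simp [tangent_gen, eps_ne_zero])
  rcases hgen 0 with h0 | h0
  · exact ⟨gen 0, hx, h0⟩
  rcases hgen 1 with h1 | h1
  · exact ⟨gen 1, hy, h1⟩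
  refine ⟨gen 0 + gen 1, hxy, ?_⟩
  linear_combination h0 + h1 + xyz * two_eq_zero

/-- For every nonzero `r ∈ m`, the annihilator `(0 : r)` is not contained in `m²`. -/
theorem stmt2 :
    ∀ r ∈ mIdeal, r ≠ 0 →
      ¬ ({s : Rcir | s * r = 0} ⊆ (↑(mIdeal ^ 2) : Set Rcir)) := by
  intro r hr _ hsub
  by_cases hr2 : r ∈ mIdeal ^ 2
  · obtain ⟨s, hs, hsr⟩ := exists_notMem_sq_mul_eq_zero hr2
    exact hs (hsub hsr)
  · exact hr2 (hsub ((sq r).symm.trans (sq_eq_zero_of_mem_mIdeal hr)))
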